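/- Let D be an oriented knot diagram with n ≥ 1 crossings, modeled by a Gauss code g, and let D' be the diagram obtained from D by a crossing change at a crossing c₀. Then X_D(t) + X_{D'}(t) = A + B in ℤ[t]. -/

import Mathlib

open Polynomial Finset

/-- An oriented knot diagram with `n` crossings, modeled by its oriented Gauss code. -/
structure GaussCode (n : ℕ) where
  g : ZMod (2 * n) → Fin n × Bool
  o : Fin n → ZMod (2 * n)
  u : Fin n → ZMod (2 * n)
  over_iff : ∀ (c : Fin n) (e : ZMod (2 * n)), g e = (c, true) ↔ e = o c
  under_iff : ∀ (c : Fin n) (e : ZMod (2 * n)), g e = (c, false) ↔ e = u c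

namespace GaussCode

variable {n : ℕ}

/-- The warping degree of the base position `e`: the number of crossings whose
under-passage occurs strictly before its over-passage when traversing the diagram
starting at `e`. -/
def d (D : GaussCode n) (e : ZMod (2 * n)) : ℕ :=
  (Finset.univ.filter fun c : Fin n => (D.u c - e).val < (D.o c - e).val).card

/-- The warping crossing polynomial. -/
noncomputable def Xpoly (D : GaussCode n) : Polynomial ℤ :=
  ∑ c : Fin n, Polynomial.X ^ D.d (D.o c)

/-- The warping polynomial. -/
noncomputable def Wpoly (D : GaussCode n) : Polynomial ℤ :=
  ∑ k ∈ Finset.range (2 * n), Polynomial.X ^ D.d (k : ZMod (2 * n))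

/-- The warping degree of the diagram: minimum over all base positions. -/
noncomputable def wdeg (D : GaussCode n) : ℕ :=
  sInf (Set.range fun e : ZMod (2 * n) => D.d e)

/-- The diagram is alternating. -/
def Alternating (D : GaussCode n) : Prop :=
  ∀ e : ZMod (2 * n), (D.g e).2 ≠ (D.g (e + 1)).2

end GaussCode


/-!
Summing `t ^ d(e)` over all `2n` base points gives `W_D = (1 + t) X_D`: moving the base point
past an over-passage raises the warping degree by one and past an under-passage lowers it by
one, so comparing `W_D` with its cyclic shift and cancelling `t - 1` identifies the under-passage
sum with `t X_D`. A crossing change at `c₀` only toggles whether `c₀` is counted, so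
`d_{D'} = d_D + 1` on the edges of `A` and `d_{D'} = d_D - 1` on those of `B`. Hence
`W_D = A + t B` and `W_{D'} = t A + B`; adding and cancelling `1 + t` gives the formula.
-/

open Polynomial Finset

namespace ZMod

def Precedes {m : ℕ} (e a b : ZMod m) : Prop := (a - e).val < (b - e).val

instance {m : ℕ} (e a b : ZMod m) : Decidable (Precedes e a b) := Nat.decLt _ _

theorem Precedes.asymm {m : ℕ} {e a b : ZMod m} (h : Precedes e a b) : ¬Precedes e b a :=
  lt_asymm h

theorem not_precedes_self_right {m : ℕ} (e a : ZMod m) : ¬Precedes e a e := by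
  simp [Precedes]

theorem precedes_self_left {m : ℕ} {e b : ZMod m} (hb : b ≠ e) : Precedes e e b := by
  simpa [Precedes, Nat.pos_iff_ne_zero, val_eq_zero, sub_eq_zero] using hb

theorem sum_range_natCast {M : Type*} [AddCommMonoid M] (m : ℕ) [NeZero m] (f : ZMod m → M) :
    ∑ k ∈ range m, f k = ∑ e, f e := by
  refine sum_nbij' (fun k => (k : ZMod m)) val (fun _ _ => mem_univ _)
    (fun e _ => mem_range.2 (val_lt e)) (fun k hk => val_cast_of_lt (mem_range.1 hk))
    (fun e _ => natCast_zmod_val e) fun _ _ => rfl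

variable {m : ℕ} [NeZero m] {e a b : ZMod m}

theorem val_le_val_neg_one (a : ZMod m) : a.val ≤ (-1 : ZMod m).val := by
  obtain ⟨k, rfl⟩ := Nat.exists_eq_succ_of_ne_zero (NeZero.ne m)
  rw [val_neg_one]
  exact Nat.lt_succ_iff.1 (val_lt a)

theorem val_sub_eq_val_sub_add_one_add_one (h : a ≠ e) :
    (a - e).val = (a - (e + 1)).val + 1 := by
  have hpos : (a - e).val ≠ 0 := by simpa [val_eq_zero, sub_eq_zero] using h
  have hcast : (((a - e).val - 1 : ℕ) : ZMod m) = a - (e + 1) := by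
    rw [Nat.cast_sub (Nat.one_le_iff_ne_zero.2 hpos), natCast_zmod_val]
    push_cast
    ring
  rw [← hcast, val_cast_of_lt ((Nat.sub_le _ _).trans_lt (val_lt _))]
  omega

theorem precedes_add_one_iff (ha : a ≠ e) (hb : b ≠ e) :
    Precedes (e + 1) a b ↔ Precedes e a b := by
  rw [Precedes, Precedes, val_sub_eq_val_sub_add_one_add_one ha,
    val_sub_eq_val_sub_add_one_add_one hb, Nat.add_lt_add_iff_right]

theorem not_precedes_add_one_left : ¬Precedes (e + 1) e b := by
  rw [Precedes, show e - (e + 1) = -1 by ring, not_lt]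
  exact val_le_val_neg_one _

theorem precedes_or_precedes (hab : a ≠ b) : Precedes e a b ∨ Precedes e b a :=
  lt_or_gt_of_ne fun h => hab (by simpa using val_injective m h)

end ZMod

theorem Finset.card_filter_eq_card_filter_add_one {α : Type*} [Fintype α] [DecidableEq α]
    {p q : α → Prop} [DecidablePred p] [DecidablePred q] (a : α) (hqa : q a) (hpa : ¬p a)
    (h : ∀ x ≠ a, q x ↔ p x) : #{x | q x} = #{x | p x} + 1 := by
  rw [← card_insert_of_notMem (s := {x | p x}) (by simpa using hpa)]
  congr 1
  ext x
  by_cases hx : x = a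
  · simp [hx, hqa]
  · simp [hx, h x hx]

open ZMod

namespace GaussCode

variable {n : ℕ} (D : GaussCode n)

theorem g_o (c : Fin n) : D.g (D.o c) = (c, true) := (D.over_iff c _).2 rfl

theorem g_u (c : Fin n) : D.g (D.u c) = (c, false) := (D.under_iff c _).2 rfl

theorem o_ne_u (c c' : Fin n) : D.o c ≠ D.u c' := fun h => by
  simpa [h, g_u] using D.g_o c

theorem o_injective : Function.Injective D.o := fun c c' h => by
  simpa [h, g_o, eq_comm] using D.g_o c

theorem u_injective : Function.Injective D.u := fun c c' h => by
  simpa [h, g_u, eq_comm] using D.g_u c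

theorem d_eq_card (e : ZMod (2 * n)) : D.d e = #{c | Precedes e (D.u c) (D.o c)} := rfl

def positionEquiv : ZMod (2 * n) ≃ Fin n × Bool where
  toFun := D.g
  invFun p := if p.2 then D.o p.1 else D.u p.1
  left_inv e := by
    rcases h : D.g e with ⟨c, _ | _⟩
    · exact ((D.under_iff c e).1 h).symm
    · exact ((D.over_iff c e).1 h).symm
  right_inv := by rintro ⟨c, _ | _⟩ <;> simp [g_o, g_u]

-- The polynomials `A` and `B` of the crossing change formula.
noncomputable def underToOverSum (c₀ : Fin n) : ℤ[X] :=
  ∑ k ∈ range (2 * n),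
    if Precedes (k : ZMod (2 * n)) (D.o c₀) (D.u c₀) then X ^ D.d (k : ZMod (2 * n)) else 0

noncomputable def overToUnderSum (c₀ : Fin n) : ℤ[X] :=
  ∑ k ∈ range (2 * n),
    if Precedes (k : ZMod (2 * n)) (D.u c₀) (D.o c₀) then X ^ (D.d (k : ZMod (2 * n)) - 1)
    else 0

structure IsCrossingChange (D D' : GaussCode n) (c₀ : Fin n) : Prop where
  o_self : D'.o c₀ = D.u c₀
  u_self : D'.u c₀ = D.o c₀
  o_of_ne : ∀ c ≠ c₀, D'.o c = D.o c
  u_of_ne : ∀ c ≠ c₀, D'.u c = D.u c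

namespace IsCrossingChange

variable {D D' : GaussCode n} {c₀ : Fin n}

theorem of_g (h1 : D'.g (D.o c₀) = (c₀, false)) (h2 : D'.g (D.u c₀) = (c₀, true))
    (h3 : ∀ e, e ≠ D.o c₀ → e ≠ D.u c₀ → D'.g e = D.g e) :
    IsCrossingChange D D' c₀ where
  o_self := ((D'.over_iff c₀ _).1 h2).symm
  u_self := ((D'.under_iff c₀ _).1 h1).symm
  o_of_ne c hc := ((D'.over_iff c _).1 (by
    rw [h3 _ (D.o_injective.ne hc) (D.o_ne_u c c₀), g_o])).symm
  u_of_ne c hc := ((D'.under_iff c _).1 (by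
    rw [h3 _ (D.o_ne_u c₀ c).symm (D.u_injective.ne hc), g_u])).symm

variable {e : ZMod (2 * n)}

theorem precedes_iff_of_ne (h : IsCrossingChange D D' c₀) {c : Fin n} (hc : c ≠ c₀) :
    Precedes e (D'.u c) (D'.o c) ↔ Precedes e (D.u c) (D.o c) := by
  rw [h.o_of_ne c hc, h.u_of_ne c hc]

theorem d'_eq_d_add_one (h : IsCrossingChange D D' c₀) (he : Precedes e (D.o c₀) (D.u c₀)) :
    D'.d e = D.d e + 1 := by
  rw [d_eq_card, d_eq_card]
  refine card_filter_eq_card_filter_add_one c₀ ?_ he.asymm fun c hc => h.precedes_iff_of_ne hc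
  rwa [h.o_self, h.u_self]

theorem d_eq_d'_add_one (h : IsCrossingChange D D' c₀) (he : Precedes e (D.u c₀) (D.o c₀)) :
    D.d e = D'.d e + 1 := by
  rw [d_eq_card, d_eq_card]
  refine card_filter_eq_card_filter_add_one c₀ he ?_ fun c hc => (h.precedes_iff_of_ne hc).symm
  rw [h.o_self, h.u_self]
  exact he.asymm

end IsCrossingChange

variable [NeZero n]

theorem sum_eq_sum_o_add_sum_u {M : Type*} [AddCommMonoid M] (f : ZMod (2 * n) → M) :
    ∑ e, f e = ∑ c, f (D.o c) + ∑ c, f (D.u c) := by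
  rw [← D.positionEquiv.symm.sum_comp, Fintype.sum_prod_type]
  simp [positionEquiv, sum_add_distrib]

theorem d_o_add_one (c : Fin n) : D.d (D.o c + 1) = D.d (D.o c) + 1 := by
  rw [d_eq_card, d_eq_card]
  refine card_filter_eq_card_filter_add_one c ?_ (not_precedes_self_right _ _) fun c' hc' => ?_
  · exact (precedes_or_precedes (D.o_ne_u c c).symm).resolve_right not_precedes_add_one_left
  · exact precedes_add_one_iff (D.o_ne_u c c').symm (D.o_injective.ne hc')

theorem d_u_eq_d_u_add_one_add_one (c : Fin n) : D.d (D.u c) = D.d (D.u c + 1) + 1 := by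
  rw [d_eq_card, d_eq_card]
  refine card_filter_eq_card_filter_add_one c (precedes_self_left (D.o_ne_u c c))
    not_precedes_add_one_left fun c' hc' => ?_
  exact (precedes_add_one_iff (D.u_injective.ne hc') (D.o_ne_u c' c)).symm

theorem sum_X_pow_d : ∑ e, (X : ℤ[X]) ^ D.d e = (1 + X) * D.Xpoly := by
  have hshift : ∑ e, (X : ℤ[X]) ^ D.d (e + 1) = ∑ e, X ^ D.d e :=
    Equiv.sum_comp (Equiv.addRight 1) fun e => X ^ D.d e
  have hover : ∑ c, (X : ℤ[X]) ^ D.d (D.o c + 1) = X * D.Xpoly := by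
    rw [Xpoly, mul_sum]
    exact sum_congr rfl fun c _ => by rw [d_o_add_one, pow_succ']
  have hunder : ∑ c, (X : ℤ[X]) ^ D.d (D.u c) = X * ∑ c, X ^ D.d (D.u c + 1) := by
    rw [mul_sum]
    exact sum_congr rfl fun c _ => by rw [d_u_eq_d_u_add_one_add_one, pow_succ']
  rw [sum_eq_sum_o_add_sum_u, sum_eq_sum_o_add_sum_u, hover, hunder, ← Xpoly] at hshift
  have hX : (X - 1 : ℤ[X]) ≠ 0 := by simpa using X_sub_C_ne_zero (1 : ℤ)
  have hunder_eq : ∑ c, (X : ℤ[X]) ^ D.d (D.u c + 1) = D.Xpoly :=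
    mul_left_cancel₀ hX (by linear_combination -hshift)
  rw [sum_eq_sum_o_add_sum_u, hunder, hunder_eq, ← Xpoly]
  ring

theorem Wpoly_eq_one_add_X_mul_Xpoly : D.Wpoly = (1 + X) * D.Xpoly := by
  rw [Wpoly, sum_range_natCast (2 * n) fun e => (X : ℤ[X]) ^ D.d e, sum_X_pow_d]

namespace IsCrossingChange

variable {D D' : GaussCode n} {c₀ : Fin n}

theorem Wpoly_left_eq (h : IsCrossingChange D D' c₀) :
    D.Wpoly = D.underToOverSum c₀ + X * D.overToUnderSum c₀ := by
  rw [Wpoly, underToOverSum, overToUnderSum, mul_sum, ← sum_add_distrib]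
  refine sum_congr rfl fun k _ => ?_
  rcases precedes_or_precedes (e := (k : ZMod (2 * n))) (D.o_ne_u c₀ c₀) with he | he
  · rw [if_pos he, if_neg he.asymm]
    ring
  · rw [if_neg he.asymm, if_pos he, h.d_eq_d'_add_one he, Nat.add_sub_cancel]
    ring

theorem Wpoly_right_eq (h : IsCrossingChange D D' c₀) :
    D'.Wpoly = X * D.underToOverSum c₀ + D.overToUnderSum c₀ := by
  rw [Wpoly, underToOverSum, overToUnderSum, mul_sum, ← sum_add_distrib]
  refine sum_congr rfl fun k _ => ?_
  rcases precedes_or_precedes (e := (k : ZMod (2 * n))) (D.o_ne_u c₀ c₀) with he | he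
  · rw [if_pos he, if_neg he.asymm, h.d'_eq_d_add_one he]
    ring
  · rw [if_neg he.asymm, if_pos he, h.d_eq_d'_add_one he, Nat.add_sub_cancel]
    ring

end IsCrossingChange

end GaussCode

open GaussCode

theorem crossing_change_sum_general
    (n : ℕ) (D D' : GaussCode n) (c₀ : Fin n)
    (h1 : D'.g (D.o c₀) = (c₀, false))
    (h2 : D'.g (D.u c₀) = (c₀, true))
    (h3 : ∀ e : ZMod (2 * n), e ≠ D.o c₀ → e ≠ D.u c₀ → D'.g e = D.g e) :
    D.Xpoly + D'.Xpoly
      = (∑ k ∈ Finset.range (2 * n),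
            if (D.o c₀ - (k : ZMod (2 * n))).val < (D.u c₀ - (k : ZMod (2 * n))).val
            then (Polynomial.X : Polynomial ℤ) ^ D.d (k : ZMod (2 * n)) else 0)
        + ∑ k ∈ Finset.range (2 * n),
            if (D.u c₀ - (k : ZMod (2 * n))).val < (D.o c₀ - (k : ZMod (2 * n))).val
            then (Polynomial.X : Polynomial ℤ) ^ (D.d (k : ZMod (2 * n)) - 1) else 0 := by
  have : NeZero n := NeZero.of_pos c₀.pos
  have h := IsCrossingChange.of_g h1 h2 h3
  have h1X : (1 + X : ℤ[X]) ≠ 0 := by simpa [add_comm] using X_add_C_ne_zero (1 : ℤ)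
  change D.Xpoly + D'.Xpoly = D.underToOverSum c₀ + D.overToUnderSum c₀
  refine mul_left_cancel₀ h1X ?_
  rw [mul_add, ← D.Wpoly_eq_one_add_X_mul_Xpoly, ← D'.Wpoly_eq_one_add_X_mul_Xpoly,
    h.Wpoly_left_eq, h.Wpoly_right_eq]
  ring

/-- Crossing change formula: `X_D(t) + X_{D'}(t) = A + B`. -/
theorem crossing_change_sum
    (n : ℕ) (hn : 1 ≤ n) (D D' : GaussCode n) (c₀ : Fin n)
    (h1 : D'.g (D.o c₀) = (c₀, false))
    (h2 : D'.g (D.u c₀) = (c₀, true))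
    (h3 : ∀ e : ZMod (2 * n), e ≠ D.o c₀ → e ≠ D.u c₀ → D'.g e = D.g e) :
    D.Xpoly + D'.Xpoly
      = (∑ k ∈ Finset.range (2 * n),
            if (D.o c₀ - (k : ZMod (2 * n))).val < (D.u c₀ - (k : ZMod (2 * n))).val
            then (Polynomial.X : Polynomial ℤ) ^ D.d (k : ZMod (2 * n)) else 0)
        + ∑ k ∈ Finset.range (2 * n),
            if (D.u c₀ - (k : ZMod (2 * n))).val < (D.o c₀ - (k : ZMod (2 * n))).val
            then (Polynomial.X : Polynomial ℤ) ^ (D.d (k : ZMod (2 * n)) - 1) else 0 :=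
  crossing_change_sum_general n D D' c₀ h1 h2 h3
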